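/- arXiv:2201.08914 — 4 statements merged into one kernel-verified Lean document; each statement's English description precedes it below -/
import Mathlib

section
/- Local Lipschitz continuity: there exists C₂ > 0 such that for all vector fields u, w, v with gradients in L³(Ω), ∫_Ω (|∇u|∇u - |∇w|∇w) : ∇v dx ≤ C₂ r ‖∇(u - w)‖_{L³(Ω)} ‖∇v‖_{L³(Ω)}, where r = max{‖∇u‖_{L³(Ω)}, ‖∇w‖_{L³(Ω)}}. -/
open MeasureTheory
noncomputable section

/-- Gradient matrix (∇u)_{ij} = ∂u_i/∂x_j of a vector field. -/
def gradMat {d : ℕ} (u : EuclideanSpace ℝ (Fin d) → EuclideanSpace ℝ (Fin d))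
    (x : EuclideanSpace ℝ (Fin d)) : Fin d → Fin d → ℝ :=
  fun i j => fderiv ℝ (fun y => u y i) x (EuclideanSpace.single j 1)

/-- Frobenius norm of a d×d matrix. -/
def fnorm {d : ℕ} (A : Fin d → Fin d → ℝ) : ℝ := Real.sqrt (∑ i, ∑ j, (A i j)^2)

/-- Frobenius inner product A : B of d×d matrices. -/
def finner {d : ℕ} (A B : Fin d → Fin d → ℝ) : ℝ := ∑ i, ∑ j, A i j * B i j

/-- j-th component of the convective derivative (u·∇)v. -/
def convDeriv {d : ℕ} (u v : EuclideanSpace ℝ (Fin d) → EuclideanSpace ℝ (Fin d))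
    (x : EuclideanSpace ℝ (Fin d)) (j : Fin d) : ℝ :=
  ∑ i, u x i * fderiv ℝ (fun y => v y j) x (EuclideanSpace.single i 1)

/-- Laplacian of a scalar field. -/
def lapS {d : ℕ} (g : EuclideanSpace ℝ (Fin d) → ℝ) (x : EuclideanSpace ℝ (Fin d)) : ℝ :=
  ∑ j, fderiv ℝ (fun y => fderiv ℝ g y (EuclideanSpace.single j 1)) x (EuclideanSpace.single j 1)

/-- L²(Ω) inner product of two vector fields. -/
def ip {d : ℕ} (Ω : Set (EuclideanSpace ℝ (Fin d)))
    (u v : EuclideanSpace ℝ (Fin d) → EuclideanSpace ℝ (Fin d)) : ℝ :=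
  ∫ x in Ω, (inner ℝ (u x) (v x) : ℝ)

/-- L²(Ω) inner product of the gradients of two vector fields. -/
def gip {d : ℕ} (Ω : Set (EuclideanSpace ℝ (Fin d)))
    (u v : EuclideanSpace ℝ (Fin d) → EuclideanSpace ℝ (Fin d)) : ℝ :=
  ∫ x in Ω, finner (gradMat u x) (gradMat v x)

/-- The pairing (u·∇v, w) in L²(Ω). -/
def cform {d : ℕ} (Ω : Set (EuclideanSpace ℝ (Fin d)))
    (u v w : EuclideanSpace ℝ (Fin d) → EuclideanSpace ℝ (Fin d)) : ℝ :=
  ∫ x in Ω, ∑ j, convDeriv u v x j * w x j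

/-- The explicitly skew-symmetrized trilinear form b*(u,v,w). -/
def bstar {d : ℕ} (Ω : Set (EuclideanSpace ℝ (Fin d)))
    (u v w : EuclideanSpace ℝ (Fin d) → EuclideanSpace ℝ (Fin d)) : ℝ :=
  (1/2) * cform Ω u v w - (1/2) * cform Ω u w v

/-! Viewing `a = ∇u(x)`, `b = ∇w(x)`, `c = ∇v(x)` as vectors of `ℝ^(d×d)`, the identity
`|a| a - |b| b = |a| (a - b) + (|a| - |b|) b` gives the pointwise bound
`(|a| a - |b| b) : c ≤ (|a| + |b|) |a - b| |c|`. Integrating, and applying Hölder's inequality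
with exponents `(3, 3, 3)` to each of the two resulting products, gives the claim with `C₂ = 2`. -/

open scoped ENNReal

section Holder

variable {α : Type*} [MeasurableSpace α] {μ : Measure α}

theorem lintegral_mul_mul_le_L3_mul_L3_mul_L3 {f g h : α → ℝ≥0∞}
    (hf : AEMeasurable f μ) (hg : AEMeasurable g μ) (hh : AEMeasurable h μ) :
    ∫⁻ x, f x * g x * h x ∂μ ≤
      (∫⁻ x, f x ^ 3 ∂μ) ^ (1 / 3 : ℝ) * (∫⁻ x, g x ^ 3 ∂μ) ^ (1 / 3 : ℝ) *
        (∫⁻ x, h x ^ 3 ∂μ) ^ (1 / 3 : ℝ) := by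
  have cube (y : ℝ≥0∞) : (y ^ 3) ^ (3⁻¹ : ℝ) = y := by
    simpa using ENNReal.pow_rpow_inv_natCast (n := 3) (by norm_num) y
  have := ENNReal.lintegral_prod_norm_pow_le (μ := μ) Finset.univ
    (f := ![fun x => f x ^ 3, fun x => g x ^ 3, fun x => h x ^ 3]) (p := fun _ => (1 / 3 : ℝ))
    (by simp [Fin.forall_fin_succ, hf.pow_const, hg.pow_const, hh.pow_const])
    (by norm_num) (by norm_num)
  simpa [Fin.prod_univ_three, mul_assoc, cube] using this

theorem integral_pow_three_rpow_nonneg {f : α → ℝ} (hf : 0 ≤ f) :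
    0 ≤ (∫ x, f x ^ 3 ∂μ) ^ (1 / 3 : ℝ) :=
  Real.rpow_nonneg (integral_nonneg fun x => pow_nonneg (hf x) 3) _

theorem ofReal_integral_pow_three_rpow {f : α → ℝ} (hf : 0 ≤ f)
    (hf3 : Integrable (fun x => f x ^ 3) μ) :
    ENNReal.ofReal ((∫ x, f x ^ 3 ∂μ) ^ (1 / 3 : ℝ)) =
      (∫⁻ x, ENNReal.ofReal (f x) ^ 3 ∂μ) ^ (1 / 3 : ℝ) := by
  rw [← ENNReal.ofReal_rpow_of_nonneg (integral_nonneg fun x => pow_nonneg (hf x) 3)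
      (by norm_num),
    ofReal_integral_eq_lintegral_ofReal hf3 (.of_forall fun x => pow_nonneg (hf x) 3)]
  simp_rw [ENNReal.ofReal_pow (hf _)]

theorem lintegral_ofReal_mul_mul_le {f g h : α → ℝ} (hf : 0 ≤ f) (hg : 0 ≤ g) (hh : 0 ≤ h)
    (hfm : AEMeasurable f μ) (hgm : AEMeasurable g μ) (hhm : AEMeasurable h μ)
    (hf3 : Integrable (fun x => f x ^ 3) μ) (hg3 : Integrable (fun x => g x ^ 3) μ)
    (hh3 : Integrable (fun x => h x ^ 3) μ) :
    ∫⁻ x, ENNReal.ofReal (f x * g x * h x) ∂μ ≤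
      ENNReal.ofReal ((∫ x, f x ^ 3 ∂μ) ^ (1 / 3 : ℝ) * (∫ x, g x ^ 3 ∂μ) ^ (1 / 3 : ℝ) *
        (∫ x, h x ^ 3 ∂μ) ^ (1 / 3 : ℝ)) := by
  rw [ENNReal.ofReal_mul
      (mul_nonneg (integral_pow_three_rpow_nonneg hf) (integral_pow_three_rpow_nonneg hg)),
    ENNReal.ofReal_mul (integral_pow_three_rpow_nonneg hf),
    ofReal_integral_pow_three_rpow hf hf3, ofReal_integral_pow_three_rpow hg hg3,
    ofReal_integral_pow_three_rpow hh hh3]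
  simp_rw [ENNReal.ofReal_mul (mul_nonneg (hf _) (hg _)), ENNReal.ofReal_mul (hf _)]
  exact lintegral_mul_mul_le_L3_mul_L3_mul_L3
    hfm.ennreal_ofReal hgm.ennreal_ofReal hhm.ennreal_ofReal

theorem integrable_mul_mul_of_integrable_pow_three {f g h : α → ℝ} (hf : 0 ≤ f) (hg : 0 ≤ g)
    (hh : 0 ≤ h) (hfm : AEMeasurable f μ) (hgm : AEMeasurable g μ) (hhm : AEMeasurable h μ)
    (hf3 : Integrable (fun x => f x ^ 3) μ) (hg3 : Integrable (fun x => g x ^ 3) μ)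
    (hh3 : Integrable (fun x => h x ^ 3) μ) :
    Integrable (fun x => f x * g x * h x) μ :=
  ⟨((hfm.mul hgm).mul hhm).aestronglyMeasurable,
    (hasFiniteIntegral_iff_ofReal
      (.of_forall fun x => mul_nonneg (mul_nonneg (hf x) (hg x)) (hh x))).2
      ((lintegral_ofReal_mul_mul_le hf hg hh hfm hgm hhm hf3 hg3 hh3).trans_lt
        ENNReal.ofReal_lt_top)⟩

theorem integral_mul_mul_le_L3_mul_L3_mul_L3 {f g h : α → ℝ} (hf : 0 ≤ f) (hg : 0 ≤ g)
    (hh : 0 ≤ h) (hfm : AEMeasurable f μ) (hgm : AEMeasurable g μ) (hhm : AEMeasurable h μ)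
    (hf3 : Integrable (fun x => f x ^ 3) μ) (hg3 : Integrable (fun x => g x ^ 3) μ)
    (hh3 : Integrable (fun x => h x ^ 3) μ) :
    ∫ x, f x * g x * h x ∂μ ≤
      (∫ x, f x ^ 3 ∂μ) ^ (1 / 3 : ℝ) * (∫ x, g x ^ 3 ∂μ) ^ (1 / 3 : ℝ) *
        (∫ x, h x ^ 3 ∂μ) ^ (1 / 3 : ℝ) := by
  rw [integral_eq_lintegral_of_nonneg_ae
    (.of_forall fun x => mul_nonneg (mul_nonneg (hf x) (hg x)) (hh x))
    ((hfm.mul hgm).mul hhm).aestronglyMeasurable]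
  exact ENNReal.toReal_le_of_le_ofReal (mul_nonneg (mul_nonneg
    (integral_pow_three_rpow_nonneg hf) (integral_pow_three_rpow_nonneg hg))
    (integral_pow_three_rpow_nonneg hh))
    (lintegral_ofReal_mul_mul_le hf hg hh hfm hgm hhm hf3 hg3 hh3)

theorem integrable_pow_three_of_le_add {f g h : α → ℝ} (hfm : AEStronglyMeasurable f μ)
    (hf : 0 ≤ f) (hg : 0 ≤ g) (hh : 0 ≤ h) (hfgh : ∀ x, f x ≤ g x + h x)
    (hg3 : Integrable (fun x => g x ^ 3) μ) (hh3 : Integrable (fun x => h x ^ 3) μ) :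
    Integrable (fun x => f x ^ 3) μ := by
  refine ((hg3.add hh3).const_mul 4).mono' (hfm.pow 3) (.of_forall fun x => ?_)
  rw [Real.norm_of_nonneg (pow_nonneg (hf x) 3)]
  calc f x ^ 3 ≤ (g x + h x) ^ 3 := pow_le_pow_left₀ (hf x) (hfgh x) 3
    _ ≤ 2 ^ 2 * (g x ^ 3 + h x ^ 3) := add_pow_le (hg x) (hh x) 3
    _ = 4 * (g x ^ 3 + h x ^ 3) := by norm_num

end Holder

theorem norm_norm_smul_sub_norm_smul_le {E : Type*} [SeminormedAddCommGroup E] [NormedSpace ℝ E]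
    (a b : E) : ‖‖a‖ • a - ‖b‖ • b‖ ≤ (‖a‖ + ‖b‖) * ‖a - b‖ := by
  have hsplit : ‖a‖ • a - ‖b‖ • b = ‖a‖ • (a - b) + (‖a‖ - ‖b‖) • b := by
    rw [smul_sub, sub_smul]; abel
  calc ‖‖a‖ • a - ‖b‖ • b‖ ≤ ‖a‖ * ‖a - b‖ + |‖a‖ - ‖b‖| * ‖b‖ := by
        rw [hsplit]
        refine (norm_add_le _ _).trans_eq ?_
        rw [norm_smul, norm_smul, Real.norm_eq_abs, Real.norm_eq_abs, abs_norm]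
    _ ≤ ‖a‖ * ‖a - b‖ + ‖a - b‖ * ‖b‖ := by gcongr; exact abs_norm_sub_norm_le a b
    _ = (‖a‖ + ‖b‖) * ‖a - b‖ := by ring

section Frobenius

variable {d : ℕ}

def frobeniusVec (A : Fin d → Fin d → ℝ) : EuclideanSpace ℝ (Fin d × Fin d) :=
  WithLp.toLp 2 fun p => A p.1 p.2

theorem fnorm_eq_norm_frobeniusVec (A : Fin d → Fin d → ℝ) : fnorm A = ‖frobeniusVec A‖ := by
  simp [EuclideanSpace.norm_eq, fnorm, frobeniusVec, Fintype.sum_prod_type]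

theorem finner_eq_inner_frobeniusVec (A B : Fin d → Fin d → ℝ) :
    finner A B = inner ℝ (frobeniusVec A) (frobeniusVec B) := by
  simp [finner, frobeniusVec, PiLp.inner_apply, Fintype.sum_prod_type, mul_comm]

theorem frobeniusVec_sub (A B : Fin d → Fin d → ℝ) :
    frobeniusVec (fun i j => A i j - B i j) = frobeniusVec A - frobeniusVec B := rfl

theorem frobeniusVec_smul (c : ℝ) (A : Fin d → Fin d → ℝ) :
    frobeniusVec (fun i j => c * A i j) = c • frobeniusVec A := rfl

theorem fnorm_nonneg (A : Fin d → Fin d → ℝ) : 0 ≤ fnorm A := Real.sqrt_nonneg _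

theorem fnorm_sub_le (A B : Fin d → Fin d → ℝ) :
    fnorm (fun i j => A i j - B i j) ≤ fnorm A + fnorm B := by
  simpa only [fnorm_eq_norm_frobeniusVec, frobeniusVec_sub] using norm_sub_le _ _

theorem finner_fnorm_mul_sub_le (A B C : Fin d → Fin d → ℝ) :
    finner (fun i j => fnorm A * A i j - fnorm B * B i j) C ≤
      (fnorm A + fnorm B) * fnorm (fun i j => A i j - B i j) * fnorm C := by
  simp only [finner_eq_inner_frobeniusVec, fnorm_eq_norm_frobeniusVec, frobeniusVec_sub,
    frobeniusVec_smul]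
  exact (real_inner_le_norm _ _).trans
    (mul_le_mul_of_nonneg_right (norm_norm_smul_sub_norm_smul_le _ _) (norm_nonneg _))

theorem continuous_fnorm : Continuous (fnorm : (Fin d → Fin d → ℝ) → ℝ) := by
  unfold fnorm; fun_prop

theorem Measurable.fnorm {α : Type*} [MeasurableSpace α] {f : α → Fin d → Fin d → ℝ}
    (hf : Measurable f) : Measurable fun x => fnorm (f x) :=
  continuous_fnorm.measurable.comp hf

end Frobenius

theorem measurable_gradMat {d : ℕ} (u : EuclideanSpace ℝ (Fin d) → EuclideanSpace ℝ (Fin d)) :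
    Measurable (gradMat u) :=
  measurable_pi_lambda _ fun _ => measurable_pi_lambda _ fun _ =>
    measurable_fderiv_apply_const ℝ _ _

theorem stmt5_general (d : ℕ) (Ω : Set (EuclideanSpace ℝ (Fin d))) :
    ∃ C₂ : ℝ, 0 < C₂ ∧
      ∀ u w v : EuclideanSpace ℝ (Fin d) → EuclideanSpace ℝ (Fin d),
        IntegrableOn (fun x => fnorm (gradMat u x)^3) Ω volume →
        IntegrableOn (fun x => fnorm (gradMat w x)^3) Ω volume →
        IntegrableOn (fun x => fnorm (gradMat v x)^3) Ω volume →
        IntegrableOn (fun x =>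
          finner (fun i j => fnorm (gradMat u x) * gradMat u x i j
                             - fnorm (gradMat w x) * gradMat w x i j)
                 (gradMat v x)) Ω volume →
        (∫ x in Ω,
            finner (fun i j => fnorm (gradMat u x) * gradMat u x i j
                               - fnorm (gradMat w x) * gradMat w x i j)
                   (gradMat v x)) ≤
          C₂ * max ((∫ x in Ω, fnorm (gradMat u x)^3) ^ ((1:ℝ)/3))
                   ((∫ x in Ω, fnorm (gradMat w x)^3) ^ ((1:ℝ)/3)) *
            (∫ x in Ω, fnorm (fun i j => gradMat u x i j - gradMat w x i j)^3) ^ ((1:ℝ)/3) *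
            (∫ x in Ω, fnorm (gradMat v x)^3) ^ ((1:ℝ)/3) := by
  refine ⟨2, two_pos, fun u w v hu hw hv hφ => ?_⟩
  set A := fun x => fnorm (gradMat u x)
  set B := fun x => fnorm (gradMat w x)
  set C := fun x => fnorm (gradMat v x)
  set D := fun x => fnorm (fun i j => gradMat u x i j - gradMat w x i j)
  have hnn (f : EuclideanSpace ℝ (Fin d) → Fin d → Fin d → ℝ) : 0 ≤ fun x => fnorm (f x) :=
    fun _ => fnorm_nonneg _
  have hAm : Measurable A := (measurable_gradMat u).fnorm
  have hBm : Measurable B := (measurable_gradMat w).fnorm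
  have hCm : Measurable C := (measurable_gradMat v).fnorm
  have hDm : Measurable D := ((measurable_gradMat u).sub (measurable_gradMat w)).fnorm
  have hD : IntegrableOn (fun x => D x ^ 3) Ω :=
    integrable_pow_three_of_le_add hDm.aestronglyMeasurable (hnn _) (hnn _) (hnn _)
      (fun x => fnorm_sub_le _ _) hu hw
  have hADC := integrable_mul_mul_of_integrable_pow_three (hnn _) (hnn _) (hnn _)
    hAm.aemeasurable hDm.aemeasurable hCm.aemeasurable hu hD hv
  have hBDC := integrable_mul_mul_of_integrable_pow_three (hnn _) (hnn _) (hnn _)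
    hBm.aemeasurable hDm.aemeasurable hCm.aemeasurable hw hD hv
  calc _ ≤ ∫ x in Ω, A x * D x * C x + B x * D x * C x :=
        integral_mono hφ (hADC.add hBDC) fun x =>
          (finner_fnorm_mul_sub_le _ _ _).trans_eq (by ring)
    _ = (∫ x in Ω, A x * D x * C x) + ∫ x in Ω, B x * D x * C x := integral_add hADC hBDC
    _ ≤ _ := add_le_add
        (integral_mul_mul_le_L3_mul_L3_mul_L3 (hnn _) (hnn _) (hnn _)
          hAm.aemeasurable hDm.aemeasurable hCm.aemeasurable hu hD hv)
        (integral_mul_mul_le_L3_mul_L3_mul_L3 (hnn _) (hnn _) (hnn _)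
          hBm.aemeasurable hDm.aemeasurable hCm.aemeasurable hw hD hv)
    _ ≤ _ := by
      rw [← add_mul, ← add_mul]
      gcongr ?_ * _ * _
      · exact integral_pow_three_rpow_nonneg (hnn _)
      · exact integral_pow_three_rpow_nonneg (hnn _)
      · exact (add_le_add (le_max_left _ _) (le_max_right _ _)).trans_eq (two_mul _).symm

/-- local Lipschitz continuity of the p-Laplacian-type operator with p = 3. -/
theorem stmt5 (d : ℕ) (Ω : Set (EuclideanSpace ℝ (Fin d)))
    (hΩo : IsOpen Ω) (hΩb : Bornology.IsBounded Ω) :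
    ∃ C₂ : ℝ, 0 < C₂ ∧
      ∀ u w v : EuclideanSpace ℝ (Fin d) → EuclideanSpace ℝ (Fin d),
        IntegrableOn (fun x => fnorm (gradMat u x)^3) Ω volume →
        IntegrableOn (fun x => fnorm (gradMat w x)^3) Ω volume →
        IntegrableOn (fun x => fnorm (gradMat v x)^3) Ω volume →
        IntegrableOn (fun x =>
          finner (fun i j => fnorm (gradMat u x) * gradMat u x i j
                             - fnorm (gradMat w x) * gradMat w x i j)
                 (gradMat v x)) Ω volume →
        (∫ x in Ω,
            finner (fun i j => fnorm (gradMat u x) * gradMat u x i j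
                               - fnorm (gradMat w x) * gradMat w x i j)
                   (gradMat v x)) ≤
          C₂ * max ((∫ x in Ω, fnorm (gradMat u x)^3) ^ ((1:ℝ)/3))
                   ((∫ x in Ω, fnorm (gradMat w x)^3) ^ ((1:ℝ)/3)) *
            (∫ x in Ω, fnorm (fun i j => gradMat u x i j - gradMat w x i j)^3) ^ ((1:ℝ)/3) *
            (∫ x in Ω, fnorm (gradMat v x)^3) ^ ((1:ℝ)/3) :=
  stmt5_general d Ω
end
end

section
/- Pointwise monotonicity inequality underlying strong monotonicity: for all vectors (or matrices) a, b in a finite-dimensional inner product space, (|a|a - |b|b) · (a - b) ≥ (1/4)|a - b|³ (in particular the left-hand side is nonnegative). -/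
/-! Writing `2⟪a, b⟫ = ‖a‖² + ‖b‖² - ‖a - b‖²` and `‖a‖³ + ‖b‖³ = (‖a‖ + ‖b‖)(‖a‖² - ‖a‖‖b‖ + ‖b‖²)`
turns the pairing into `(‖a‖ + ‖b‖) / 2 · ((‖a‖ - ‖b‖)² + ‖a - b‖²)`; since `‖a - b‖ ≤ ‖a‖ + ‖b‖`,
this is at least `‖a - b‖³ / 2`. -/

section RealInnerProductSpace

variable {E : Type*} [NormedAddCommGroup E] [InnerProductSpace ℝ E]

theorem inner_norm_smul_sub_norm_smul_sub (a b : E) :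
    inner ℝ (‖a‖ • a - ‖b‖ • b) (a - b) =
      (‖a‖ + ‖b‖) / 2 * ((‖a‖ - ‖b‖) ^ 2 + ‖a - b‖ ^ 2) := by
  rw [norm_sub_sq_real, inner_sub_left, inner_sub_right, inner_sub_right,
    real_inner_smul_left, real_inner_smul_left, real_inner_smul_left, real_inner_smul_left,
    real_inner_self_eq_norm_sq, real_inner_self_eq_norm_sq, real_inner_comm b a]
  ring

theorem norm_sub_pow_three_div_two_le_inner_norm_smul_sub_norm_smul (a b : E) :
    ‖a - b‖ ^ 3 / 2 ≤ inner ℝ (‖a‖ • a - ‖b‖ • b) (a - b) := by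
  rw [inner_norm_smul_sub_norm_smul_sub]
  calc ‖a - b‖ ^ 3 / 2 = ‖a - b‖ / 2 * ‖a - b‖ ^ 2 := by ring
    _ ≤ (‖a‖ + ‖b‖) / 2 * ((‖a‖ - ‖b‖) ^ 2 + ‖a - b‖ ^ 2) := by
      gcongr
      · exact norm_sub_le a b
      · exact le_add_of_nonneg_left (sq_nonneg _)

end RealInnerProductSpace

/-- pointwise monotonicity: (|a|a - |b|b)·(a-b) ≥ (1/4)|a-b|³. -/
theorem stmt6 {n : ℕ} (a b : EuclideanSpace ℝ (Fin n)) :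
    (1/4) * ‖a - b‖^3 ≤ (inner ℝ (‖a‖ • a - ‖b‖ • b) (a - b) : ℝ) := by
  have hcube : 0 ≤ ‖a - b‖ ^ 3 := by positivity
  linarith [norm_sub_pow_three_div_two_le_inner_norm_smul_sub_norm_smul a b]
end

section
/- Uniform-in-time stability for the modified Smagorinsky model: any strong solution w satisfies ‖w(T)‖² + (C_s⁴δ²/μ²)‖∇w(T)‖² ≤ e^{-αT}[‖w(0)‖² + (C_s⁴δ²/μ²)‖∇w(0)‖²] + (C/α)(1 - e^{-αT}), where α = min{ν/(2C_{PF}²), μ²ν/(C_s⁴δ²)} and C = (2/ν)C_{PF}² sup_t ‖f‖². -/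
open MeasureTheory
noncomputable section

/-! Along the solution, `y = ‖w‖² + k‖∇w‖²` with `k = C_s⁴δ²/μ²` satisfies
`y' + α y ≤ C`: Young's inequality splits `(f, w)` so that, after the Poincaré–Friedrichs
inequality, half of the viscous term `ν‖∇w‖²` is consumed; the other half dominates `α‖w‖²`
(as `α C_PF² ≤ ν/2`) and the full term `ν‖∇w‖²` dominates `α k‖∇w‖²` (as `α k ≤ ν`), while the
Smagorinsky term `(C_sδ)²‖∇w‖³_{L³}` has the right sign and is dropped. Grönwall's inequality
with rate `-α` then gives the uniform bound. -/

open Real InnerProductSpace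

theorem le_exp_mul_add_of_deriv_add_mul_le {y y' : ℝ → ℝ} {α C : ℝ} (hα : α ≠ 0)
    (hy : ∀ t, HasDerivAt y (y' t) t) (bound : ∀ t, y' t + α * y t ≤ C) {T : ℝ} (hT : 0 ≤ T) :
    y T ≤ exp (-(α * T)) * y 0 + C / α * (1 - exp (-(α * T))) := by
  have h := le_gronwallBound_of_liminf_deriv_right_le (δ := y 0) (K := -α) (ε := C)
    (fun t _ => (hy t).continuousAt.continuousWithinAt)
    (fun t _ _ hr => (hy t).hasDerivWithinAt.liminf_right_slope_le hr) le_rfl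
    (fun t _ => by linarith [bound t]) T ⟨hT, le_rfl⟩
  simp only [gronwallBound_of_K_ne_0 (neg_ne_zero.2 hα), sub_zero, neg_mul, div_neg] at h
  calc y T ≤ y 0 * exp (-(α * T)) + -(C / α * (exp (-(α * T)) - 1)) := h
    _ = exp (-(α * T)) * y 0 + C / α * (1 - exp (-(α * T))) := by ring

theorem two_mul_inner_le_mul_add_inv_mul {E : Type*} [NormedAddCommGroup E]
    [InnerProductSpace ℝ E] (u v : E) {ε : ℝ} (hε : 0 < ε) :
    2 * ⟪u, v⟫_ℝ ≤ ε * ‖v‖ ^ 2 + ε⁻¹ * ‖u‖ ^ 2 :=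
  calc 2 * ⟪u, v⟫_ℝ ≤ 2 * ‖v‖ * ‖u‖ := by nlinarith [real_inner_le_norm u v]
    _ ≤ ε * ‖v‖ ^ 2 + ε⁻¹ * ‖u‖ ^ 2 := two_mul_le_add_mul_sq hε

theorem two_mul_integral_inner_le {X E : Type*} [MeasurableSpace X] [NormedAddCommGroup E]
    [InnerProductSpace ℝ E] {μ : Measure X} {f g : X → E} {ε : ℝ} (hε : 0 < ε)
    (hfg : Integrable (fun x => ⟪f x, g x⟫_ℝ) μ) (hf : Integrable (fun x => ‖f x‖ ^ 2) μ)
    (hg : Integrable (fun x => ‖g x‖ ^ 2) μ) :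
    2 * ∫ x, ⟪f x, g x⟫_ℝ ∂μ ≤ ε * ∫ x, ‖g x‖ ^ 2 ∂μ + ε⁻¹ * ∫ x, ‖f x‖ ^ 2 ∂μ := by
  rw [← integral_const_mul, ← integral_const_mul, ← integral_const_mul,
    ← integral_add (hg.const_mul ε) (hf.const_mul ε⁻¹)]
  exact integral_mono (hfg.const_mul 2) ((hg.const_mul ε).add (hf.const_mul ε⁻¹))
    fun x => two_mul_inner_le_mul_add_inv_mul (f x) (g x) hε

theorem energy_rate_add_mul_le {ν c k α A B P R F : ℝ} (hν : 0 < ν) (hc : 0 < c) (hα : 0 ≤ α)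
    (hαc : α * c ≤ ν / 2) (hαk : α * k ≤ ν) (hA : A ≤ c * B) (hB : 0 ≤ B) (hR : 0 ≤ R)
    (hP : 2 * P ≤ ν / (2 * c) * A + (ν / (2 * c))⁻¹ * F) :
    2 * (P - ν * B - R) + α * (A + k * B) ≤ 2 / ν * c * F := by
  have hA_visc : ν / (2 * c) * A ≤ ν / 2 * B :=
    calc ν / (2 * c) * A ≤ ν / (2 * c) * (c * B) := by gcongr
      _ = ν / 2 * B := by field_simp
  have hF : (ν / (2 * c))⁻¹ * F = 2 / ν * c * F := by field_simp
  nlinarith [mul_le_mul_of_nonneg_left hA hα, mul_le_mul_of_nonneg_right hαc hB,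
    mul_le_mul_of_nonneg_right hαk hB]

theorem stmt9_general (d : ℕ) (Ω : Set (EuclideanSpace ℝ (Fin d)))
    (ν Cs δ μ CPF : ℝ) (hν : 0 < ν) (hCs : 0 < Cs) (hδ : 0 < δ) (hμ : 0 < μ) (hCPF : 0 < CPF)
    (w : ℝ → EuclideanSpace ℝ (Fin d) → EuclideanSpace ℝ (Fin d))
    (f : EuclideanSpace ℝ (Fin d) → EuclideanSpace ℝ (Fin d))
    (y : ℝ → ℝ)
    (hy : ∀ t, y t = (∫ x in Ω, ‖w t x‖^2)
        + (Cs^4 * δ^2 / μ^2) * ∫ x in Ω, fnorm (gradMat (w t) x)^2)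
    -- the energy equality (1/2)y' + ν‖∇w‖² + (C_sδ)²‖∇w‖³_{L³} = (f,w):
    (hE : ∀ t, HasDerivAt y
      (2 * ((∫ x in Ω, (inner ℝ (f x) (w t x) : ℝ))
        - ν * (∫ x in Ω, fnorm (gradMat (w t) x)^2)
        - (Cs*δ)^2 * ∫ x in Ω, fnorm (gradMat (w t) x)^3)) t)
    -- Poincaré–Friedrichs: ‖w‖ ≤ C_{PF} ‖∇w‖:
    (hP : ∀ t, (∫ x in Ω, ‖w t x‖^2) ≤ CPF^2 * ∫ x in Ω, fnorm (gradMat (w t) x)^2)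
    (hintw : ∀ t, IntegrableOn (fun x => ‖w t x‖^2) Ω volume)
    (hintf : IntegrableOn (fun x => ‖f x‖^2) Ω volume)
    (hintfw : ∀ t, IntegrableOn (fun x => (inner ℝ (f x) (w t x) : ℝ)) Ω volume)
    (α C : ℝ)
    (hα : α = min (ν / (2 * CPF^2)) (μ^2 * ν / (Cs^4 * δ^2)))
    (hC : C = (2 / ν) * CPF^2 * ∫ x in Ω, ‖f x‖^2) :
    ∀ T : ℝ, 0 ≤ T →
      y T ≤ Real.exp (-(α * T)) * y 0 + (C / α) * (1 - Real.exp (-(α * T))) := by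
  have hα_pos : 0 < α := hα ▸ lt_min (by positivity) (by positivity)
  have hαc : α * CPF ^ 2 ≤ ν / 2 := by
    have := (le_div_iff₀ (by positivity)).1 (hα ▸ min_le_left _ _ : α ≤ ν / (2 * CPF ^ 2))
    linarith
  have hαk : α * (Cs ^ 4 * δ ^ 2 / μ ^ 2) ≤ ν := by
    have hk : μ ^ 2 * ν / (Cs ^ 4 * δ ^ 2) = ν / (Cs ^ 4 * δ ^ 2 / μ ^ 2) := by field_simp
    exact (le_div_iff₀ (by positivity)).1 (hk ▸ hα ▸ min_le_right _ _)
  intro T hT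
  refine le_exp_mul_add_of_deriv_add_mul_le hα_pos.ne' hE (fun t => ?_) hT
  rw [hy t, hC]
  exact energy_rate_add_mul_le hν (by positivity) hα_pos.le hαc hαk (hP t)
    (integral_nonneg fun x => by positivity)
    (mul_nonneg (by positivity) (integral_nonneg fun x => pow_nonneg (Real.sqrt_nonneg _) 3))
    (two_mul_integral_inner_le (by positivity) (hintfw t) hintf (hintw t))

/-- uniform-in-time stability for the modified Smagorinsky model.
The energy equality (assumed, as the context permits) is stated as a derivative identity
for y(t) = ‖w(t)‖² + (C_s⁴δ²/μ²)‖∇w(t)‖². -/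
theorem stmt9 (d : ℕ) (Ω : Set (EuclideanSpace ℝ (Fin d)))
    (hΩo : IsOpen Ω) (hΩb : Bornology.IsBounded Ω)
    (ν Cs δ μ CPF : ℝ) (hν : 0 < ν) (hCs : 0 < Cs) (hδ : 0 < δ) (hμ : 0 < μ) (hCPF : 0 < CPF)
    (w : ℝ → EuclideanSpace ℝ (Fin d) → EuclideanSpace ℝ (Fin d))
    (f : EuclideanSpace ℝ (Fin d) → EuclideanSpace ℝ (Fin d))
    (y : ℝ → ℝ)
    (hy : ∀ t, y t = (∫ x in Ω, ‖w t x‖^2)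
        + (Cs^4 * δ^2 / μ^2) * ∫ x in Ω, fnorm (gradMat (w t) x)^2)
    -- the energy equality (1/2)y' + ν‖∇w‖² + (C_sδ)²‖∇w‖³_{L³} = (f,w):
    (hE : ∀ t, HasDerivAt y
      (2 * ((∫ x in Ω, (inner ℝ (f x) (w t x) : ℝ))
        - ν * (∫ x in Ω, fnorm (gradMat (w t) x)^2)
        - (Cs*δ)^2 * ∫ x in Ω, fnorm (gradMat (w t) x)^3)) t)
    -- Poincaré–Friedrichs: ‖w‖ ≤ C_{PF} ‖∇w‖:
    (hP : ∀ t, (∫ x in Ω, ‖w t x‖^2) ≤ CPF^2 * ∫ x in Ω, fnorm (gradMat (w t) x)^2)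
    (hintw : ∀ t, IntegrableOn (fun x => ‖w t x‖^2) Ω volume)
    (hintg : ∀ t, IntegrableOn (fun x => fnorm (gradMat (w t) x)^2) Ω volume)
    (hintf : IntegrableOn (fun x => ‖f x‖^2) Ω volume)
    (hintfw : ∀ t, IntegrableOn (fun x => (inner ℝ (f x) (w t x) : ℝ)) Ω volume)
    (α C : ℝ)
    (hα : α = min (ν / (2 * CPF^2)) (μ^2 * ν / (Cs^4 * δ^2)))
    (hC : C = (2 / ν) * CPF^2 * ∫ x in Ω, ‖f x‖^2) :
    ∀ T : ℝ, 0 ≤ T →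
      y T ≤ Real.exp (-(α * T)) * y 0 + (C / α) * (1 - Real.exp (-(α * T))) :=
  stmt9_general d Ω ν Cs δ μ CPF hν hCs hδ hμ hCPF w f y hy hE hP hintw hintf hintfw α C hα hC
end
end

section
/- Time-averaged dissipation bound for the modified Smagorinsky model: for any strong solution w, (1/(|Ω|T)) ∫₀ᵀ [(ν/2)‖∇w‖² + (C_sδ)²‖∇w‖³_{L³}] dt ≤ (1/(|Ω|T)) ∫₀ᵀ (C_{PF}²/(2ν))‖f‖² dt + O(1/T), where the O(1/T) term is (1/(2|Ω|T))[‖w(0)‖² + (C_s⁴δ²/μ²)‖∇w(0)‖²]. -/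
open MeasureTheory
noncomputable section

/-!
Since `(f, w) ≤ (ν/2)‖∇w‖² + (C_PF²/(2ν))‖f‖²` (Cauchy–Schwarz, weighted Young with weight
`ν / C_PF²`, then Poincaré–Friedrichs), the energy equality yields the differential inequality
`y'/2 + (ν/2)‖∇w‖² + (C_sδ)²‖∇w‖³_{L³} ≤ (C_PF²/(2ν))‖f‖²`. Integrating it over `[0, T]` and
discarding `y T ≥ 0` gives the bound.
-/

section Young

variable {E : Type*} [NormedAddCommGroup E] [InnerProductSpace ℝ E]

theorem two_mul_real_inner_le_add_mul_sq {ε : ℝ} (hε : 0 < ε) (u v : E) :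
    2 * inner ℝ u v ≤ ε * ‖v‖ ^ 2 + ε⁻¹ * ‖u‖ ^ 2 :=
  calc 2 * inner ℝ u v ≤ 2 * ‖v‖ * ‖u‖ := by
        rw [mul_assoc, mul_comm ‖v‖]; gcongr; exact real_inner_le_norm u v
    _ ≤ ε * ‖v‖ ^ 2 + ε⁻¹ * ‖u‖ ^ 2 := two_mul_le_add_mul_sq hε

variable {α : Type*} [MeasurableSpace α] {μ : Measure α} {f w : α → E}

theorem two_mul_integral_inner_le_s19 {ε : ℝ} (hε : 0 < ε)
    (hf : Integrable (fun x => ‖f x‖ ^ 2) μ) (hw : Integrable (fun x => ‖w x‖ ^ 2) μ)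
    (hfw : Integrable (fun x => inner ℝ (f x) (w x)) μ) :
    2 * ∫ x, inner ℝ (f x) (w x) ∂μ
      ≤ ε * ∫ x, ‖w x‖ ^ 2 ∂μ + ε⁻¹ * ∫ x, ‖f x‖ ^ 2 ∂μ := by
  rw [← integral_const_mul, ← integral_const_mul, ← integral_const_mul,
    ← integral_add (hw.const_mul ε) (hf.const_mul ε⁻¹)]
  exact integral_mono (hfw.const_mul 2) ((hw.const_mul ε).add (hf.const_mul ε⁻¹))
    fun x => two_mul_real_inner_le_add_mul_sq hε (f x) (w x)

theorem integral_inner_le_of_integral_sq_le {C ν G : ℝ} (hC : 0 < C) (hν : 0 < ν)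
    (hf : Integrable (fun x => ‖f x‖ ^ 2) μ) (hw : Integrable (fun x => ‖w x‖ ^ 2) μ)
    (hfw : Integrable (fun x => inner ℝ (f x) (w x)) μ)
    (hP : ∫ x, ‖w x‖ ^ 2 ∂μ ≤ C ^ 2 * G) :
    ∫ x, inner ℝ (f x) (w x) ∂μ ≤ ν / 2 * G + C ^ 2 / (2 * ν) * ∫ x, ‖f x‖ ^ 2 ∂μ := by
  have hε : 0 < ν / C ^ 2 := by positivity
  have hYoung := two_mul_integral_inner_le_s19 hε hf hw hfw
  have hPν : ν / C ^ 2 * ∫ x, ‖w x‖ ^ 2 ∂μ ≤ ν * G := by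
    calc ν / C ^ 2 * ∫ x, ‖w x‖ ^ 2 ∂μ ≤ ν / C ^ 2 * (C ^ 2 * G) := by gcongr
      _ = ν * G := by field_simp
  have hinv : (ν / C ^ 2)⁻¹ = 2 * (C ^ 2 / (2 * ν)) := by field_simp
  rw [hinv] at hYoung
  linarith

end Young

theorem intervalIntegral_le_of_half_deriv_add_le {y y' D : ℝ → ℝ} {a b K : ℝ} (hab : a ≤ b)
    (hy : ∀ t ∈ Set.Icc a b, HasDerivAt y (y' t) t) (hD : IntervalIntegrable D volume a b)
    (hbound : ∀ t ∈ Set.Ioo a b, y' t / 2 + D t ≤ K) :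
    ∫ t in a..b, D t ≤ (b - a) * K + (y a - y b) / 2 := by
  have hφ : IntervalIntegrable (fun t => 2 * (K - D t)) volume a b :=
    (intervalIntegrable_const.sub hD).const_mul 2
  have hFTC : y b - y a ≤ ∫ t in a..b, 2 * (K - D t) :=
    intervalIntegral.sub_le_integral_of_hasDeriv_right_of_le hab
      (fun t ht => (hy t ht).continuousAt.continuousWithinAt)
      (fun t ht => (hy t (Set.Ioo_subset_Icc_self ht)).hasDerivWithinAt)
      ((intervalIntegrable_iff_integrableOn_Icc_of_le hab).mp hφ)
      (fun t ht => by linarith [hbound t ht])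
  rw [intervalIntegral.integral_const_mul, intervalIntegral.integral_sub intervalIntegrable_const hD,
    intervalIntegral.integral_const, smul_eq_mul] at hFTC
  linarith

theorem stmt19_general (d : ℕ) (Ω : Set (EuclideanSpace ℝ (Fin d)))
    (ν Cs δ μ CPF T : ℝ)
    (hν : 0 < ν) (hCPF : 0 < CPF) (hT : 0 < T)
    (w : ℝ → EuclideanSpace ℝ (Fin d) → EuclideanSpace ℝ (Fin d))
    (f : EuclideanSpace ℝ (Fin d) → EuclideanSpace ℝ (Fin d))
    (y : ℝ → ℝ)
    (hy : ∀ t, y t = (∫ x in Ω, ‖w t x‖^2)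
        + (Cs^4 * δ^2 / μ^2) * ∫ x in Ω, fnorm (gradMat (w t) x)^2)
    -- the energy equality (1/2)y' + ν‖∇w‖² + (C_sδ)²‖∇w‖³_{L³} = (f,w):
    (hE : ∀ t, HasDerivAt y
      (2 * ((∫ x in Ω, (inner ℝ (f x) (w t x) : ℝ))
        - ν * (∫ x in Ω, fnorm (gradMat (w t) x)^2)
        - (Cs*δ)^2 * ∫ x in Ω, fnorm (gradMat (w t) x)^3)) t)
    (htint2 : IntervalIntegrable (fun t => ∫ x in Ω, fnorm (gradMat (w t) x)^2) volume 0 T)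
    (htint3 : IntervalIntegrable (fun t => ∫ x in Ω, fnorm (gradMat (w t) x)^3) volume 0 T)
    -- Poincaré–Friedrichs: ‖w‖ ≤ C_{PF} ‖∇w‖:
    (hP : ∀ t, (∫ x in Ω, ‖w t x‖^2) ≤ CPF^2 * ∫ x in Ω, fnorm (gradMat (w t) x)^2)
    (hintw : ∀ t, IntegrableOn (fun x => ‖w t x‖^2) Ω volume)
    (hintf : IntegrableOn (fun x => ‖f x‖^2) Ω volume)
    (hintfw : ∀ t, IntegrableOn (fun x => (inner ℝ (f x) (w t x) : ℝ)) Ω volume) :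
    (1 / ((volume Ω).toReal * T)) * ∫ t in (0:ℝ)..T,
        ((ν/2) * (∫ x in Ω, fnorm (gradMat (w t) x)^2)
          + (Cs*δ)^2 * ∫ x in Ω, fnorm (gradMat (w t) x)^3)
      ≤ (1 / ((volume Ω).toReal * T)) * (∫ t in (0:ℝ)..T,
            (CPF^2 / (2*ν)) * ∫ x in Ω, ‖f x‖^2)
        + (1 / (2 * (volume Ω).toReal * T)) * y 0 := by
  set K := (CPF^2 / (2*ν)) * ∫ x in Ω, ‖f x‖^2
  have hpairing : ∀ t, (∫ x in Ω, (inner ℝ (f x) (w t x) : ℝ))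
      ≤ ν / 2 * (∫ x in Ω, fnorm (gradMat (w t) x)^2) + K := fun t =>
    integral_inner_le_of_integral_sq_le hCPF hν hintf (hintw t) (hintfw t) (hP t)
  have hdissipation := intervalIntegral_le_of_half_deriv_add_le (K := K) hT.le
    (fun t _ => hE t) ((htint2.const_mul (ν/2)).add (htint3.const_mul ((Cs*δ)^2)))
    (fun t _ => by linarith [hpairing t])
  have hyT : 0 ≤ y T := by rw [hy T]; positivity
  rw [intervalIntegral.integral_const, smul_eq_mul, sub_zero]
  calc _ ≤ (1 / ((volume Ω).toReal * T)) * (T * K + y 0 / 2) := by gcongr; linarith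
    _ = _ := by ring

/-- time-averaged dissipation bound for the modified Smagorinsky model.
y(t) = ‖w(t)‖² + (C_s⁴δ²/μ²)‖∇w(t)‖² and the energy equality is assumed as a derivative
identity (as the context permits). -/
theorem stmt19 (d : ℕ) (Ω : Set (EuclideanSpace ℝ (Fin d)))
    (hΩo : IsOpen Ω) (hΩb : Bornology.IsBounded Ω) (hΩpos : 0 < (volume Ω).toReal)
    (ν Cs δ μ CPF T : ℝ)
    (hν : 0 < ν) (hCs : 0 < Cs) (hδ : 0 < δ) (hμ : 0 < μ) (hCPF : 0 < CPF) (hT : 0 < T)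
    (w : ℝ → EuclideanSpace ℝ (Fin d) → EuclideanSpace ℝ (Fin d))
    (f : EuclideanSpace ℝ (Fin d) → EuclideanSpace ℝ (Fin d))
    (y : ℝ → ℝ)
    (hy : ∀ t, y t = (∫ x in Ω, ‖w t x‖^2)
        + (Cs^4 * δ^2 / μ^2) * ∫ x in Ω, fnorm (gradMat (w t) x)^2)
    -- the energy equality (1/2)y' + ν‖∇w‖² + (C_sδ)²‖∇w‖³_{L³} = (f,w):
    (hE : ∀ t, HasDerivAt y
      (2 * ((∫ x in Ω, (inner ℝ (f x) (w t x) : ℝ))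
        - ν * (∫ x in Ω, fnorm (gradMat (w t) x)^2)
        - (Cs*δ)^2 * ∫ x in Ω, fnorm (gradMat (w t) x)^3)) t)
    (hderint : IntervalIntegrable (fun t =>
      2 * ((∫ x in Ω, (inner ℝ (f x) (w t x) : ℝ))
        - ν * (∫ x in Ω, fnorm (gradMat (w t) x)^2)
        - (Cs*δ)^2 * ∫ x in Ω, fnorm (gradMat (w t) x)^3)) volume 0 T)
    (htint2 : IntervalIntegrable (fun t => ∫ x in Ω, fnorm (gradMat (w t) x)^2) volume 0 T)
    (htint3 : IntervalIntegrable (fun t => ∫ x in Ω, fnorm (gradMat (w t) x)^3) volume 0 T)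
    (htintfw : IntervalIntegrable (fun t => ∫ x in Ω, (inner ℝ (f x) (w t x) : ℝ)) volume 0 T)
    -- Poincaré–Friedrichs: ‖w‖ ≤ C_{PF} ‖∇w‖:
    (hP : ∀ t, (∫ x in Ω, ‖w t x‖^2) ≤ CPF^2 * ∫ x in Ω, fnorm (gradMat (w t) x)^2)
    (hintw : ∀ t, IntegrableOn (fun x => ‖w t x‖^2) Ω volume)
    (hintg : ∀ t, IntegrableOn (fun x => fnorm (gradMat (w t) x)^2) Ω volume)
    (hintf : IntegrableOn (fun x => ‖f x‖^2) Ω volume)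
    (hintfw : ∀ t, IntegrableOn (fun x => (inner ℝ (f x) (w t x) : ℝ)) Ω volume) :
    (1 / ((volume Ω).toReal * T)) * ∫ t in (0:ℝ)..T,
        ((ν/2) * (∫ x in Ω, fnorm (gradMat (w t) x)^2)
          + (Cs*δ)^2 * ∫ x in Ω, fnorm (gradMat (w t) x)^3)
      ≤ (1 / ((volume Ω).toReal * T)) * (∫ t in (0:ℝ)..T,
            (CPF^2 / (2*ν)) * ∫ x in Ω, ‖f x‖^2)
        + (1 / (2 * (volume Ω).toReal * T)) * y 0 :=
  stmt19_general d Ω ν Cs δ μ CPF T hν hCPF hT w f y hy hE htint2 htint3 hP hintw hintf hintfw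
end
end
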